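/- arXiv:2601.09495 — 3 statements merged into one kernel-verified Lean document; each statement's English description precedes it below -/
import Mathlib

section
/- Let c ∈ (0, 1), a ≥ 0 and x ∈ ℝ, and define f : ℝ → ℝ by f(h) = (1 − c)·h + c·tanh(x + a·h). Then for every initial condition h₀ ∈ ℝ, the sequence of iterates f^[n](h₀) converges to some limit h* ∈ ℝ, and this limit satisfies the steady-state equation h* = tanh(x + a·h*). In other words, the internal-clock recurrent unit converges between two timesteps, and its converged state is a solution of the implicit function F(h, x) = h − tanh(x + a·h) = 0. -/
open Filter

lemma tanh_eq_aux (t : ℝ) : Real.tanh t = 1 - 2 / (Real.exp (2 * t) + 1) := by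
  have h1 : Real.exp t ≠ 0 := (Real.exp_pos t).ne'
  have h2 : Real.exp (2 * t) + 1 ≠ 0 := by positivity
  rw [Real.tanh_eq_sinh_div_cosh, Real.sinh_eq, Real.cosh_eq]
  have he : Real.exp (2 * t) = Real.exp t * Real.exp t := by
    rw [← Real.exp_add]; ring_nf
  have hne : Real.exp t + Real.exp (-t) ≠ 0 := by positivity
  rw [Real.exp_neg] at hne ⊢
  rw [he]
  field_simp
  ring

lemma tanh_mono : Monotone Real.tanh := by
  intro s t hst
  rw [tanh_eq_aux, tanh_eq_aux]
  have h1 : (0:ℝ) < Real.exp (2 * s) + 1 := by positivity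
  have h2 : Real.exp (2 * s) ≤ Real.exp (2 * t) := Real.exp_le_exp.2 (by linarith)
  have := div_le_div_of_nonneg_left (by norm_num : (0:ℝ) ≤ 2) h1
    (by linarith : Real.exp (2 * s) + 1 ≤ Real.exp (2 * t) + 1)
  linarith

lemma abs_tanh_le_one (t : ℝ) : |Real.tanh t| ≤ 1 := by
  rw [tanh_eq_aux, abs_le]
  have h1 : (0:ℝ) < Real.exp (2 * t) + 1 := by positivity
  have h2 : 2 / (Real.exp (2 * t) + 1) ≤ 2 := by
    rw [div_le_iff₀ h1]; nlinarith [Real.exp_pos (2 * t)]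
  have h3 : 0 < 2 / (Real.exp (2 * t) + 1) := by positivity
  constructor <;> linarith

lemma tanh_cont : Continuous Real.tanh := by
  have : Real.tanh = fun t => 1 - 2 / (Real.exp (2 * t) + 1) := funext tanh_eq_aux
  rw [this]
  apply Continuous.sub continuous_const
  apply Continuous.div continuous_const
  · exact (Real.continuous_exp.comp (continuous_const.mul continuous_id)).add continuous_const
  · intro t; positivity

theorem convergent_rnn_iterates_converge (c a x : ℝ) (hc0 : 0 < c) (hc1 : c < 1) (ha : 0 ≤ a)
    (f : ℝ → ℝ) (hf : ∀ h, f h = (1 - c) * h + c * Real.tanh (x + a * h))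
    (h0 : ℝ) :
    ∃ hstar : ℝ, Tendsto (fun n => f^[n] h0) atTop (nhds hstar) ∧
      hstar = Real.tanh (x + a * hstar) := by
  set u : ℕ → ℝ := fun n => f^[n] h0 with hu
  have hfmono : Monotone f := by
    intro s t hst
    rw [hf, hf]
    have : Real.tanh (x + a * s) ≤ Real.tanh (x + a * t) :=
      tanh_mono (by nlinarith)
    nlinarith
  have hfcont : Continuous f := by
    have : f = fun h => (1 - c) * h + c * Real.tanh (x + a * h) := funext hf
    rw [this]
    exact ((continuous_const.mul continuous_id).add (continuous_const.mul
      (tanh_cont.comp (continuous_const.add (continuous_const.mul continuous_id)))))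
  -- boundedness
  set M : ℝ := max |h0| 1 with hM
  have hM1 : (1:ℝ) ≤ M := le_max_right _ _
  have hbound : ∀ n, |u n| ≤ M := by
    intro n
    induction n with
    | zero => exact le_max_left _ _
    | succ n ih =>
      have : u (n+1) = f (u n) := Function.iterate_succ_apply' f n h0
      rw [this, hf]
      have ht := abs_tanh_le_one (x + a * u n)
      calc |(1 - c) * u n + c * Real.tanh (x + a * u n)|
          ≤ |(1 - c) * u n| + |c * Real.tanh (x + a * u n)| := abs_add_le _ _
        _ = (1 - c) * |u n| + c * |Real.tanh (x + a * u n)| := by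
            rw [abs_mul, abs_mul, abs_of_nonneg (by linarith : (0:ℝ) ≤ 1 - c),
              abs_of_nonneg hc0.le]
        _ ≤ (1 - c) * M + c * 1 := by
            have h1 : (1 - c) * |u n| ≤ (1 - c) * M :=
              mul_le_mul_of_nonneg_left ih (by linarith)
            have h2 : c * |Real.tanh (x + a * u n)| ≤ c * 1 :=
              mul_le_mul_of_nonneg_left ht hc0.le
            linarith
        _ ≤ M := by nlinarith
  -- fixed point from limit
  have key : ∀ l : ℝ, Tendsto u atTop (nhds l) →
      ∃ hstar : ℝ, Tendsto u atTop (nhds hstar) ∧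
        hstar = Real.tanh (x + a * hstar) := by
    intro l hl
    refine ⟨l, hl, ?_⟩
    have h1 : Tendsto (fun n => u (n + 1)) atTop (nhds l) :=
      (tendsto_add_atTop_iff_nat 1).2 hl
    have h2 : (fun n => u (n + 1)) = fun n => f (u n) := by
      funext n; exact Function.iterate_succ_apply' f n h0
    rw [h2] at h1
    have h3 : Tendsto (fun n => f (u n)) atTop (nhds (f l)) :=
      (hfcont.tendsto l).comp hl
    have hfl : f l = l := tendsto_nhds_unique h3 h1
    rw [hf] at hfl
    have : c * Real.tanh (x + a * l) = c * l := by linarith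
    have := mul_left_cancel₀ hc0.ne' this
    linarith
  rcases le_total h0 (f h0) with hle | hge
  · -- increasing case
    have humono : Monotone u := by
      apply monotone_nat_of_le_succ
      intro n
      induction n with
      | zero => simpa [hu] using hle
      | succ n ih =>
        have e1 : u (n+1) = f (u n) := Function.iterate_succ_apply' f n h0
        have e2 : u (n+2) = f (u (n+1)) := Function.iterate_succ_apply' f (n+1) h0
        rw [e1] at ih
        rw [e2, e1]
        exact hfmono ih
    have hbdd : BddAbove (Set.range u) := ⟨M, by
      rintro _ ⟨n, rfl⟩; exact (abs_le.1 (hbound n)).2⟩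
    exact key _ (tendsto_atTop_ciSup humono hbdd)
  · -- decreasing case
    have huanti : Antitone u := by
      apply antitone_nat_of_succ_le
      intro n
      induction n with
      | zero => simpa [hu] using hge
      | succ n ih =>
        have e1 : u (n+1) = f (u n) := Function.iterate_succ_apply' f n h0
        have e2 : u (n+2) = f (u (n+1)) := Function.iterate_succ_apply' f (n+1) h0
        rw [e1] at ih
        rw [e2, e1]
        exact hfmono ih
    have hbdd : BddBelow (Set.range u) := ⟨-M, by
      rintro _ ⟨n, rfl⟩; exact (abs_le.1 (hbound n)).1⟩
    exact key _ (tendsto_atTop_ciInf huanti hbdd)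
end

section
/- Let c ∈ (0, 1], a ∈ ℝ with |a| < 1, and x ∈ ℝ, and define f : ℝ → ℝ by f(h) = (1 − c)·h + c·tanh(x + a·h). Then f is a contraction: for all h, h' ∈ ℝ, |f(h) − f(h')| ≤ (1 − c·(1 − |a|))·|h − h'|, with contraction constant 1 − c·(1 − |a|) < 1. Consequently f has a unique fixed point h*, and for every initial condition h₀ the iterates f^[n](h₀) converge to h* with |f^[n](h₀) − h*| ≤ (1 − c·(1 − |a|))^n·|h₀ − h*|. Hence for |a| < 1 the unit is monostable and has only fading memory. -/
/-!
Since `tanh' = 1 / cosh² ≤ 1`, `tanh` is `1`-Lipschitz, so `f` is a convex combination (weights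
`1 - c` and `c`) of the identity and an `|a|`-Lipschitz map, hence Lipschitz with constant
`1 - c (1 - |a|) < 1`. Banach's fixed point theorem then gives the unique fixed point, and iterating
the Lipschitz bound at the fixed point gives the geometric rate.
-/

open Function

namespace Real

theorem hasDerivAt_tanh (y : ℝ) : HasDerivAt tanh (1 / cosh y ^ 2) y := by
  have h := (hasDerivAt_sinh y).div (hasDerivAt_cosh y) (cosh_pos y).ne'
  rwa [← sq, ← sq, cosh_sq_sub_sinh_sq,
    show sinh / cosh = tanh from funext fun t => (tanh_eq_sinh_div_cosh t).symm] at h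

theorem lipschitzWith_tanh : LipschitzWith 1 tanh := by
  refine lipschitzWith_of_nnnorm_deriv_le (fun y => (hasDerivAt_tanh y).differentiableAt)
    fun y => ?_
  rw [← NNReal.coe_le_coe, coe_nnnorm, (hasDerivAt_tanh y).deriv, norm_eq_abs,
    abs_of_nonneg (by positivity), NNReal.coe_one, div_le_one (by positivity)]
  nlinarith [one_le_cosh y]

end Real

theorem abs_relax_sub_le {g : ℝ → ℝ} (hg : LipschitzWith 1 g) {c : ℝ} (hc0 : 0 ≤ c)
    (hc1 : c ≤ 1) (x a h h' : ℝ) :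
    |((1 - c) * h + c * g (x + a * h)) - ((1 - c) * h' + c * g (x + a * h'))| ≤
      (1 - c * (1 - |a|)) * |h - h'| := by
  have hg' : |g (x + a * h) - g (x + a * h')| ≤ |a| * |h - h'| := by
    simpa [Real.dist_eq, ← abs_mul, mul_sub] using hg.dist_le_mul (x + a * h) (x + a * h')
  calc |((1 - c) * h + c * g (x + a * h)) - ((1 - c) * h' + c * g (x + a * h'))|
      = |(1 - c) * (h - h') + c * (g (x + a * h) - g (x + a * h'))| := by ring_nf
    _ ≤ (1 - c) * |h - h'| + c * |g (x + a * h) - g (x + a * h')| := by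
      refine (abs_add_le _ _).trans_eq ?_
      rw [abs_mul, abs_mul, abs_of_nonneg (sub_nonneg.2 hc1), abs_of_nonneg hc0]
    _ ≤ (1 - c) * |h - h'| + c * (|a| * |h - h'|) := by gcongr
    _ = (1 - c * (1 - |a|)) * |h - h'| := by ring

theorem exists_unique_fixedPoint_of_dist_le_mul {α : Type*} [MetricSpace α] [Nonempty α]
    [CompleteSpace α] {f : α → α} {K : ℝ} (hK0 : 0 ≤ K) (hK1 : K < 1)
    (hf : ∀ x y, dist (f x) (f y) ≤ K * dist x y) :
    ∃ p, f p = p ∧ (∀ q, f q = q → q = p) ∧ ∀ x n, dist (f^[n] x) p ≤ K ^ n * dist x p := by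
  have hlip : LipschitzWith K.toNNReal f :=
    .of_dist_le_mul fun x y => by rw [Real.coe_toNNReal K hK0]; exact hf x y
  have hcontr : ContractingWith K.toNNReal f := ⟨Real.toNNReal_lt_one.2 hK1, hlip⟩
  set p := ContractingWith.fixedPoint f hcontr
  have hp : IsFixedPt f p := hcontr.fixedPoint_isFixedPt
  refine ⟨p, hp, fun q hq => hcontr.fixedPoint_unique hq, fun x n => ?_⟩
  have := (hlip.iterate n).dist_le_mul x p
  rwa [(hp.iterate n).eq, NNReal.coe_pow, Real.coe_toNNReal K hK0] at this

theorem monostable_contraction (c a x : ℝ) (hc0 : 0 < c) (hc1 : c ≤ 1) (ha : |a| < 1)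
    (f : ℝ → ℝ) (hf : ∀ h, f h = (1 - c) * h + c * Real.tanh (x + a * h)) :
    (∀ h h', |f h - f h'| ≤ (1 - c * (1 - |a|)) * |h - h'|) ∧
    (1 - c * (1 - |a|) < 1) ∧
    (∃ hstar : ℝ, f hstar = hstar ∧ (∀ h', f h' = h' → h' = hstar) ∧
      ∀ h0 n, |f^[n] h0 - hstar| ≤ (1 - c * (1 - |a|)) ^ n * |h0 - hstar|) := by
  have hK0 : 0 ≤ 1 - c * (1 - |a|) := by nlinarith [abs_nonneg a]
  have hK1 : 1 - c * (1 - |a|) < 1 := by nlinarith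
  have hlip (h h' : ℝ) : |f h - f h'| ≤ (1 - c * (1 - |a|)) * |h - h'| := by
    simpa only [hf] using abs_relax_sub_le Real.lipschitzWith_tanh hc0.le hc1 x a h h'
  obtain ⟨hstar, hfix, huniq, hrate⟩ :=
    exists_unique_fixedPoint_of_dist_le_mul (f := f) hK0 hK1 fun h h' => by
      rw [Real.dist_eq, Real.dist_eq]; exact hlip h h'
  exact ⟨hlip, hK1, hstar, hfix, huniq, by simpa only [Real.dist_eq] using hrate⟩
end

section
/- Let a > 1 and let h* ∈ (0, 1) satisfy tanh(a·h*) = h*. Then a·(1 − h*²) < 1. Consequently, for every c ∈ (0, 1], the update map f(h) = (1 − c)·h + c·tanh(a·h) satisfies f'(h*) = 1 − c·(1 − a·(1 − h*²)) < 1, and for c ∈ (0, 1) also f'(h*) > 0; hence the nonzero equilibria ±h* of the recurrent unit are stable. -/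
/-! At an equilibrium `h* = tanh y` with `y = a h* > 0` the gain is
`a (1 - h*²) = (y / tanh y) · sech² y = y / (sinh y cosh y) = 2y / sinh 2y`, which is `< 1`
because `sinh t > t` for `t > 0`. The derivative `1 - c (1 - a (1 - h*²))` of the update map
is then a convex combination of `1` and a gain in `(0, 1)`. -/

open Real

namespace Real

theorem hasDerivAt_tanh_s11 (x : ℝ) : HasDerivAt tanh (1 - tanh x ^ 2) x := by
  have h := (hasDerivAt_sinh x).div (hasDerivAt_cosh x) (cosh_pos x).ne'
  have hfun : sinh / cosh = tanh := funext fun y => (tanh_eq_sinh_div_cosh y).symm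
  rw [hfun] at h
  refine h.congr_deriv ?_
  rw [tanh_eq_sinh_div_cosh]
  field_simp

theorem mul_one_sub_tanh_sq_lt_tanh {y : ℝ} (hy : 0 < y) : y * (1 - tanh y ^ 2) < tanh y := by
  have hc := cosh_pos y
  have hsech : 1 - tanh y ^ 2 = 1 / cosh y ^ 2 := by
    rw [tanh_eq_sinh_div_cosh]
    field_simp
    linarith [cosh_sq y]
  have hsinh : 2 * y < 2 * sinh y * cosh y := sinh_two_mul y ▸ self_lt_sinh_iff.mpr (by linarith)
  rw [hsech, tanh_eq_sinh_div_cosh, mul_one_div, div_lt_div_iff₀ (by positivity) hc]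
  nlinarith

end Real

theorem mul_one_sub_sq_lt_one_of_tanh_mul_eq {a h : ℝ} (ha : 0 < a) (hpos : 0 < h)
    (hfix : tanh (a * h) = h) : a * (1 - h ^ 2) < 1 := by
  have key := mul_one_sub_tanh_sq_lt_tanh (mul_pos ha hpos)
  rw [hfix] at key
  nlinarith

/-- Here `a = β + 1` and the input is the constant `0`. -/
noncomputable def updateMap (a c h : ℝ) : ℝ := (1 - c) * h + c * tanh (a * h)

theorem hasDerivAt_updateMap (a c x : ℝ) :
    HasDerivAt (updateMap a c) (1 - c * (1 - a * (1 - tanh (a * x) ^ 2))) x := by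
  have hinner : HasDerivAt (fun h => tanh (a * h)) ((1 - tanh (a * x) ^ 2) * a) x := by
    simpa [Function.comp_def] using (hasDerivAt_tanh_s11 (a * x)).comp x ((hasDerivAt_id x).const_mul a)
  exact (((hasDerivAt_id' x).const_mul (1 - c)).add (hinner.const_mul c)).congr_deriv (by ring)

theorem nonzero_equilibria_stable_general (a hstar : ℝ) (ha : 1 < a)
    (hpos : 0 < hstar)
    (hfix : Real.tanh (a * hstar) = hstar) :
    a * (1 - hstar ^ 2) < 1 ∧
    (∀ c : ℝ, 0 < c → c ≤ 1 →
      ∀ f : ℝ → ℝ, (∀ h, f h = (1 - c) * h + c * Real.tanh (a * h)) →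
        HasDerivAt f (1 - c * (1 - a * (1 - hstar ^ 2))) hstar ∧
        1 - c * (1 - a * (1 - hstar ^ 2)) < 1 ∧
        (c < 1 → 0 < 1 - c * (1 - a * (1 - hstar ^ 2)))) := by
  have hgain := mul_one_sub_sq_lt_one_of_tanh_mul_eq (by linarith) hpos hfix
  have hgain_pos : 0 < a * (1 - hstar ^ 2) := by
    have := hfix ▸ tanh_sq_lt_one (a * hstar)
    nlinarith
  refine ⟨hgain, fun c hc0 _ f hf => ⟨?_, by nlinarith, fun hc1 => by nlinarith⟩⟩
  have hfeq : f = updateMap a c := funext hf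
  simpa only [hfeq, hfix] using hasDerivAt_updateMap a c hstar

theorem nonzero_equilibria_stable (a hstar : ℝ) (ha : 1 < a)
    (hpos : 0 < hstar) (hlt : hstar < 1)
    (hfix : Real.tanh (a * hstar) = hstar) :
    a * (1 - hstar ^ 2) < 1 ∧
    (∀ c : ℝ, 0 < c → c ≤ 1 →
      ∀ f : ℝ → ℝ, (∀ h, f h = (1 - c) * h + c * Real.tanh (a * h)) →
        HasDerivAt f (1 - c * (1 - a * (1 - hstar ^ 2))) hstar ∧
        1 - c * (1 - a * (1 - hstar ^ 2)) < 1 ∧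
        (c < 1 → 0 < 1 - c * (1 - a * (1 - hstar ^ 2)))) :=
  nonzero_equilibria_stable_general a hstar ha hpos hfix
end
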